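/- For all natural numbers n ≥ 1 and 1 ≤ k ≤ n and every real α with 0 < α < π, the k-th elementary symmetric function of the numbers cot((α + lπ)/n), 0 ≤ l ≤ n−1, satisfies: Σ_{0 ≤ l_1 < l_2 < ⋯ < l_k ≤ n−1} ∏_{j=1}^{k} cot((α + l_jπ)/n) equals C(n,k)·(−1)^{k/2} if k is even, and equals cot α · C(n,k)·(−1)^{(k−1)/2} if k is odd, where C(n,k) is the binomial coefficient. -/

import Mathlib

/-!
Since `cot z ∓ i = e^{∓iz} / sin z`, the polynomial `e^{iα} (X - i)^n - e^{-iα} (X + i)^n` takes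
the value `2i sin (α - n z) / sin^n z` at `cot z`, so its roots are the `n` distinct numbers
`cot ((α + lπ) / n)`, `l < n`. Its leading coefficient is `2i sin α` and its coefficient of
`X^(n-k)` is `C(n,k) (e^{iα} (-i)^k - e^{-iα} i^k)`; Vieta's formulas turn this into the
`k`-th elementary symmetric function of the cotangents, and according to the parity of `k` the
bracket is `±2i sin α` or `±2i cos α`.
-/

open Polynomial Finset Complex
open scoped Real

theorem Finset.prod_X_sub_C_coeff {R σ : Type*} [CommRing R] (s : Finset σ) (r : σ → R)
    {k : ℕ} (h : k ≤ #s) :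
    (∏ i ∈ s, (X - C (r i))).coeff k =
      (-1) ^ (#s - k) * ∑ t ∈ s.powersetCard (#s - k), ∏ i ∈ t, r i := by
  have := Multiset.prod_X_sub_C_coeff (s.val.map r) (by simpa using h)
  rwa [Multiset.map_map, Multiset.card_map, Finset.esymm_map_val] at this

theorem Polynomial.eq_C_mul_prod_X_sub_C_of_eval_eq_zero {R ι : Type*} [CommRing R] [IsDomain R]
    {p : R[X]} (s : Finset ι) {v : ι → R} (hv : Set.InjOn v s) (hdeg : p.natDegree ≤ #s)
    (hroot : ∀ i ∈ s, p.eval (v i) = 0) :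
    p = C (p.coeff #s) * ∏ i ∈ s, (X - C (v i)) := by
  have hprod : (∏ i ∈ s, (X - C (v i))).natDegree = #s := natDegree_finsetProd_X_sub_C_eq_card s v
  refine eq_of_degree_sub_lt_of_eval_index_eq s hv ?_ fun i hi => ?_
  · rw [degree_lt_iff_coeff_zero]
    intro m hm
    rcases hm.lt_or_eq with hm | rfl
    · rw [coeff_sub, coeff_eq_zero_of_natDegree_lt (hdeg.trans_lt hm), coeff_C_mul,
        coeff_eq_zero_of_natDegree_lt (hprod.trans_lt hm), mul_zero, sub_zero]
    · rw [coeff_sub, coeff_C_mul, ← hprod, (monic_prod_X_sub_C v s).coeff_natDegree, hprod,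
        mul_one, sub_self]
  · simp [hroot i hi, eval_prod, prod_eq_zero hi]

theorem Complex.exp_mul_I_sub_exp_neg_mul_I (z : ℂ) :
    exp (z * I) - exp (-(z * I)) = 2 * I * sin z := by
  rw [sin, neg_mul]
  linear_combination (exp (z * I) - exp (-(z * I))) * I_sq

theorem Complex.exp_mul_I_add_exp_neg_mul_I (z : ℂ) :
    exp (z * I) + exp (-(z * I)) = 2 * cos z := by
  rw [cos, neg_mul]
  ring

theorem Complex.cot_add_I {z : ℂ} (hz : sin z ≠ 0) : cot z + I = exp (z * I) / sin z := by
  rw [cot_eq_cos_div_sin, exp_mul_I]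
  field_simp

theorem Complex.cot_sub_I {z : ℂ} (hz : sin z ≠ 0) : cot z - I = exp (-(z * I)) / sin z := by
  rw [cot_eq_cos_div_sin, ← neg_mul, exp_mul_I, cos_neg, sin_neg]
  field_simp
  ring

noncomputable def cotPoly (n : ℕ) (a : ℂ) : ℂ[X] :=
  C (exp (a * I)) * (X - C I) ^ n - C (exp (-(a * I))) * (X + C I) ^ n

theorem eval_cot_cotPoly {z : ℂ} (hz : sin z ≠ 0) (n : ℕ) (a : ℂ) :
    (cotPoly n a).eval (cot z) = 2 * I * sin (a - n * z) / sin z ^ n := by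
  rw [cotPoly, eval_sub, eval_mul, eval_mul, eval_C, eval_C, eval_pow, eval_pow, eval_sub,
    eval_add, eval_X, eval_C, cot_sub_I hz, cot_add_I hz, div_pow, div_pow, ← exp_nat_mul,
    ← exp_nat_mul, ← exp_mul_I_sub_exp_neg_mul_I,
    show (a - n * z) * I = a * I + n * -(z * I) by ring,
    show -(a * I + n * -(z * I)) = -(a * I) + n * (z * I) by ring, exp_add, exp_add]
  ring

theorem coeff_cotPoly (n m : ℕ) (a : ℂ) :
    (cotPoly n a).coeff m =
      n.choose m * (exp (a * I) * (-I) ^ (n - m) - exp (-(a * I)) * I ^ (n - m)) := by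
  rw [cotPoly, sub_eq_add_neg X, ← map_neg C, coeff_sub, coeff_C_mul, coeff_C_mul,
    coeff_X_add_C_pow, coeff_X_add_C_pow]
  ring

theorem natDegree_cotPoly_le (n : ℕ) (a : ℂ) : (cotPoly n a).natDegree ≤ n := by
  unfold cotPoly
  compute_degree

theorem exp_mul_I_mul_neg_I_pow_sub (z : ℂ) (k : ℕ) :
    exp (z * I) * (-I) ^ k - exp (-(z * I)) * I ^ k =
      (-1) ^ k *
        (2 * I * if Even k then sin z * (-1) ^ (k / 2) else cos z * (-1) ^ ((k - 1) / 2)) := by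
  rcases Nat.even_or_odd' k with ⟨m, rfl | rfl⟩
  · rw [if_pos (even_two_mul m), Nat.mul_div_cancel_left m two_pos, pow_mul, pow_mul, pow_mul,
      neg_sq, neg_one_sq, I_sq]
    linear_combination (-1) ^ m * exp_mul_I_sub_exp_neg_mul_I z
  · rw [if_neg (Nat.not_even_two_mul_add_one m), Nat.add_sub_cancel,
      Nat.mul_div_cancel_left m two_pos, pow_succ, pow_succ, pow_succ, pow_mul, pow_mul, pow_mul,
      neg_sq, neg_one_sq, I_sq]
    linear_combination -(-1) ^ m * I * exp_mul_I_add_exp_neg_mul_I z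

theorem Real.cot_eq_tan_pi_div_two_sub (x : ℝ) : Real.cot x = Real.tan (π / 2 - x) := by
  rw [Real.cot_eq_cos_div_sin, Real.tan_eq_sin_div_cos, Real.sin_pi_div_two_sub,
    Real.cos_pi_div_two_sub]

theorem Real.injOn_cot : Set.InjOn Real.cot (Set.Ioo 0 π) := by
  intro x ⟨hx0, hxπ⟩ y ⟨hy0, hyπ⟩ hxy
  rw [Real.cot_eq_tan_pi_div_two_sub, Real.cot_eq_tan_pi_div_two_sub] at hxy
  have := Real.injOn_tan ⟨by linarith, by linarith⟩ ⟨by linarith, by linarith⟩ hxy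
  linarith

theorem add_nat_mul_pi_div_mem_Ioo {α : ℝ} (hα0 : 0 < α) (hαπ : α < π) {n l : ℕ} (hl : l < n) :
    (α + l * π) / n ∈ Set.Ioo 0 π := by
  have hn : (0 : ℝ) < n := by exact_mod_cast Nat.zero_lt_of_lt hl
  have hl' : (l : ℝ) + 1 ≤ n := by exact_mod_cast hl
  refine ⟨div_pos (by positivity) hn, (div_lt_iff₀ hn).2 ?_⟩
  nlinarith [Real.pi_pos]

theorem cotPoly_eq_C_mul_prod {α : ℝ} (hα0 : 0 < α) (hαπ : α < π) (n : ℕ) :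
    cotPoly n α = C (2 * I * sin α) * ∏ l ∈ range n, (X - C (cot ((α + l * π) / n))) := by
  have hmem : ∀ l ∈ range n, (α + l * π) / n ∈ Set.Ioo 0 π := fun l hl =>
    add_nat_mul_pi_div_mem_Ioo hα0 hαπ (mem_range.1 hl)
  have hlead : (cotPoly n α).coeff n = 2 * I * sin α := by
    rw [coeff_cotPoly, Nat.choose_self, Nat.sub_self, pow_zero, pow_zero, Nat.cast_one, one_mul,
      mul_one, mul_one, exp_mul_I_sub_exp_neg_mul_I]
  refine (eq_C_mul_prod_X_sub_C_of_eval_eq_zero (range n)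
    (v := fun l : ℕ => cot ((α + l * π) / n)) ?_
    ((natDegree_cotPoly_le n α).trans_eq (card_range n).symm) fun l hl => ?_).trans ?_
  · intro l hl m hm hlm
    dsimp only at hlm
    have hn : (n : ℝ) ≠ 0 := by exact_mod_cast (Nat.zero_lt_of_lt (mem_range.1 hl)).ne'
    have := Real.injOn_cot (hmem l hl) (hmem m hm) (by exact_mod_cast hlm)
    rwa [div_left_inj' hn, add_right_inj, mul_left_inj' Real.pi_ne_zero, Nat.cast_inj] at this
  · have hsin : sin ((α + l * π) / n) ≠ 0 := by
      exact_mod_cast (Real.sin_pos_of_pos_of_lt_pi (hmem l hl).1 (hmem l hl).2).ne'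
    have hn : (n : ℂ) ≠ 0 := by exact_mod_cast (Nat.zero_lt_of_lt (mem_range.1 hl)).ne'
    rw [eval_cot_cotPoly hsin, mul_div_cancel₀ _ hn, sub_add_cancel_left, sin_neg,
      sin_nat_mul_pi, neg_zero, mul_zero, zero_div]
  · rw [card_range, hlead]

theorem stmt_17_general (n k : ℕ) (hkn : k ≤ n)
    (α : ℝ) (hα0 : 0 < α) (hαπ : α < Real.pi) :
    ∑ s ∈ Finset.powersetCard k (Finset.range n),
        ∏ l ∈ s, Real.cot ((α + l * Real.pi) / n) =
      if Even k then (n.choose k : ℝ) * (-1 : ℝ) ^ (k / 2)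
      else Real.cot α * (n.choose k : ℝ) * (-1 : ℝ) ^ ((k - 1) / 2) := by
  have hvieta := congrArg (coeff · (n - k)) (cotPoly_eq_C_mul_prod hα0 hαπ n)
  rw [coeff_cotPoly, coeff_C_mul, prod_X_sub_C_coeff _ _ (by rw [card_range]; omega),
    card_range, Nat.sub_sub_self hkn, Nat.choose_symm hkn, exp_mul_I_mul_neg_I_pow_sub]
    at hvieta
  have hsin : sin α ≠ 0 := by exact_mod_cast (Real.sin_pos_of_pos_of_lt_pi hα0 hαπ).ne'
  have hne : 2 * I * (-1) ^ k ≠ 0 := by simp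
  split_ifs at hvieta ⊢ with hk <;> apply ofReal_injective <;> push_cast
  · refine mul_left_cancel₀ (mul_ne_zero hne hsin) ?_
    linear_combination -hvieta
  · rw [cot_eq_cos_div_sin, div_mul_eq_mul_div, div_mul_eq_mul_div, eq_div_iff hsin]
    refine mul_left_cancel₀ hne ?_
    linear_combination -hvieta

theorem stmt_17 (n k : ℕ) (hn : 1 ≤ n) (hk1 : 1 ≤ k) (hkn : k ≤ n)
    (α : ℝ) (hα0 : 0 < α) (hαπ : α < Real.pi) :
    ∑ s ∈ Finset.powersetCard k (Finset.range n),
        ∏ l ∈ s, Real.cot ((α + l * Real.pi) / n) =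
      if Even k then (n.choose k : ℝ) * (-1 : ℝ) ^ (k / 2)
      else Real.cot α * (n.choose k : ℝ) * (-1 : ℝ) ^ ((k - 1) / 2) :=
  stmt_17_general n k hkn α hα0 hαπ
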